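/- Let C1 and C2 be two distinct rigidity circuits on a common finite vertex type with a common edge e ∈ C1 ∩ C2. Then the combinatorial resultant CRes(C1, C2, e) = (C1 ∪ C2) \ {e} has exactly 2|V(C1) ∪ V(C2)| − 2 edges if and only if the common subgraph (V(C1) ∩ V(C2), C1 ∩ C2) is Laman, i.e., C1 ∩ C2 is (2,3)-sparse and |C1 ∩ C2| = 2|V(C1) ∩ V(C2)| − 3. -/

import Mathlib

open Finset

variable {V : Type*} [Fintype V] [DecidableEq V]

/-- An edge set: a finite set of unordered pairs of distinct vertices (no loops). -/
def IsEdgeSet (E : Finset (Sym2 V)) : Prop := ∀ e ∈ E, ¬ e.IsDiag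

/-- The vertex span `V(E)`: vertices incident to at least one edge of `E`. -/
def vertexSpan (E : Finset (Sym2 V)) : Finset V :=
  Finset.univ.filter fun v => ∃ e ∈ E, v ∈ e

/-- `(2,3)`-sparsity: every nonempty subset `E' ⊆ E` has `|E'| ≤ 2|V(E')| - 3`. -/
def Sparse23 (E : Finset (Sym2 V)) : Prop :=
  ∀ E' ⊆ E, E'.Nonempty → (E'.card : ℤ) ≤ 2 * (vertexSpan E').card - 3

/-- An edge set is dependent if it is not `(2,3)`-sparse. -/
def DependentES (E : Finset (Sym2 V)) : Prop := ¬ Sparse23 E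

/-- A rigidity circuit: a dependent edge set all of whose proper subsets are `(2,3)`-sparse. -/
def IsRigidityCircuit (E : Finset (Sym2 V)) : Prop :=
  IsEdgeSet E ∧ DependentES E ∧ ∀ E' ⊂ E, Sparse23 E'

/-!
A rigidity circuit `C` has exactly `2|V(C)| - 2` edges: it is dependent, and only `C` itself can
witness this, so `|C| ≥ 2|V(C)| - 2`; deleting one edge leaves a sparse set, so `|C| ≤ 2|V(C)| - 2`.
Distinct circuits are incomparable, so `C1 ∩ C2` is a proper subset of `C1` and hence always
sparse. Inclusion–exclusion on edges and on vertices then turns the edge count of the resultant,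
`|C1| + |C2| - |C1 ∩ C2| - 1`, into `2|V(C1) ∪ V(C2)| - 2` exactly when
`|C1 ∩ C2| = 2|V(C1) ∩ V(C2)| - 3`.
-/

lemma vertexSpan_mono {E E' : Finset (Sym2 V)} (h : E' ⊆ E) :
    vertexSpan E' ⊆ vertexSpan E := by
  intro v hv
  simp only [vertexSpan, mem_filter, mem_univ, true_and] at hv ⊢
  obtain ⟨f, hf, hvf⟩ := hv
  exact ⟨f, h hf, hvf⟩

lemma IsEdgeSet.two_le_card_vertexSpan {E : Finset (Sym2 V)} (hE : IsEdgeSet E)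
    (hne : E.Nonempty) : 2 ≤ (vertexSpan E).card := by
  obtain ⟨f, hf⟩ := hne
  induction f using Sym2.ind with
  | _ a b =>
    have hab : a ≠ b := by simpa [Sym2.mk_isDiag_iff] using hE _ hf
    have hspan : ({a, b} : Finset V) ⊆ vertexSpan E := by
      intro v hv
      simp only [vertexSpan, mem_filter, mem_univ, true_and]
      simp only [mem_insert, mem_singleton] at hv
      exact ⟨_, hf, by rcases hv with rfl | rfl <;> simp⟩
    calc 2 = ({a, b} : Finset V).card := (card_pair hab).symm
      _ ≤ _ := card_le_card hspan

lemma IsRigidityCircuit.nonempty_and_le_card {C : Finset (Sym2 V)} (hC : IsRigidityCircuit C) :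
    C.Nonempty ∧ 2 * ((vertexSpan C).card : ℤ) - 2 ≤ C.card := by
  obtain ⟨-, hdep, hsp⟩ := hC
  unfold DependentES Sparse23 at hdep
  push Not at hdep
  obtain ⟨E', hE'C, hE'ne, hE'⟩ := hdep
  obtain rfl | hss := eq_or_ssubset_of_subset hE'C
  · exact ⟨hE'ne, by omega⟩
  · exact absurd (hsp E' hss E' subset_rfl hE'ne) (not_le.mpr hE')

lemma IsRigidityCircuit.card_le {C : Finset (Sym2 V)} (hC : IsRigidityCircuit C) :
    (C.card : ℤ) ≤ 2 * (vertexSpan C).card - 2 := by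
  obtain ⟨f, hf⟩ := hC.nonempty_and_le_card.1
  have hcard : (C.erase f).card + 1 = C.card := card_erase_add_one hf
  rcases (C.erase f).eq_empty_or_nonempty with hemp | hrest
  · have := hC.1.two_le_card_vertexSpan ⟨f, hf⟩
    rw [hemp, card_empty] at hcard
    omega
  · have hsparse := hC.2.2 _ (erase_ssubset hf) _ subset_rfl hrest
    have hspan := card_le_card (vertexSpan_mono (erase_subset f C))
    omega

lemma IsRigidityCircuit.card_eq {C : Finset (Sym2 V)} (hC : IsRigidityCircuit C) :
    (C.card : ℤ) = 2 * (vertexSpan C).card - 2 :=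
  le_antisymm hC.card_le hC.nonempty_and_le_card.2

lemma IsRigidityCircuit.not_ssubset {C1 C2 : Finset (Sym2 V)} (hC1 : IsRigidityCircuit C1)
    (hC2 : IsRigidityCircuit C2) : ¬ C1 ⊂ C2 :=
  fun h => hC1.2.1 (hC2.2.2 C1 h)

lemma IsRigidityCircuit.sparse23_inter {C1 C2 : Finset (Sym2 V)} (hC1 : IsRigidityCircuit C1)
    (hC2 : IsRigidityCircuit C2) (hne : C1 ≠ C2) : Sparse23 (C1 ∩ C2) := by
  refine hC1.2.2 _ (Finset.ssubset_iff_subset_ne.mpr ⟨inter_subset_left, fun h => ?_⟩)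
  have hsub : C1 ⊆ C2 := h ▸ inter_subset_right
  exact hC1.not_ssubset hC2 (ssubset_of_subset_of_ne hsub hne)

lemma card_union_sdiff_singleton_add_card_inter {α : Type*} [DecidableEq α] {s t : Finset α}
    {a : α} (ha : a ∈ s ∩ t) : ((s ∪ t) \ {a}).card + 1 + (s ∩ t).card = s.card + t.card := by
  rw [sdiff_singleton_eq_erase, card_erase_add_one (inter_subset_union ha),
    card_union_add_card_inter]

/-- The combinatorial resultant of two distinct rigidity circuits on a common edge has
exactly `2|V(C1) ∪ V(C2)| - 2` edges iff the common subgraph is Laman, i.e. `C1 ∩ C2` is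
`(2,3)`-sparse with `|C1 ∩ C2| = 2|V(C1) ∩ V(C2)| - 3`. -/
theorem combinatorialResultant_card_iff_laman (C1 C2 : Finset (Sym2 V))
    (hC1 : IsRigidityCircuit C1) (hC2 : IsRigidityCircuit C2) (hne : C1 ≠ C2)
    (e : Sym2 V) (he : e ∈ C1 ∩ C2) :
    ((((C1 ∪ C2) \ {e}).card : ℤ) = 2 * ((vertexSpan C1 ∪ vertexSpan C2).card : ℤ) - 2) ↔
      (Sparse23 (C1 ∩ C2) ∧
        ((C1 ∩ C2).card : ℤ) = 2 * ((vertexSpan C1 ∩ vertexSpan C2).card : ℤ) - 3) := by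
  have hedges := card_union_sdiff_singleton_add_card_inter he
  have hvertices := card_union_add_card_inter (vertexSpan C1) (vertexSpan C2)
  have h1 := hC1.card_eq
  have h2 := hC2.card_eq
  rw [and_iff_right (hC1.sparse23_inter hC2 hne)]
  omega
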